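/- arXiv:1712.03331 — 2 statements merged into one kernel-verified Lean document; each statement's English description precedes it below -/
import Mathlib

section
/- Let −2 < γ < 0, 0 < p ≤ 2, α > 0, ν₀ > 0. Then for all t ≥ 0, sup over ξ ∈ ℝ³ of exp(−ν₀ t (1+|ξ|)^γ − α|ξ|^p) ≤ exp(−2^γ ν₀ t) + exp(−c α^{−γ/(p−γ)} t^{p/(p−γ)}), where c = ((p−γ)/(−γ))·((−γ)2^γ ν₀ / p)^{p/(p−γ)}. -/
theorem stmt_8 (γ p α ν₀ : ℝ) (hγ2 : -2 < γ) (hγ0 : γ < 0) (hp : 0 < p) (hp2 : p ≤ 2)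
    (hα : 0 < α) (hν : 0 < ν₀) (c : ℝ)
    (hc : c = ((p - γ) / (-γ)) * ((-γ) * (2 : ℝ) ^ γ * ν₀ / p) ^ (p / (p - γ)))
    (t : ℝ) (ht : 0 ≤ t) (ξ : EuclideanSpace ℝ (Fin 3)) :
    Real.exp (-(ν₀ * t * (1 + ‖ξ‖) ^ γ) - α * ‖ξ‖ ^ p)
      ≤ Real.exp (-((2 : ℝ) ^ γ * ν₀ * t)) +
        Real.exp (-(c * α ^ (-γ / (p - γ)) * t ^ (p / (p - γ)))) := by
  have hq : (0:ℝ) < p - γ := by linarith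
  have ha : (0:ℝ) < -γ := by linarith
  set s : ℝ := ‖ξ‖ with hsdef
  have hs0 : (0:ℝ) ≤ s := norm_nonneg _
  set w₁ : ℝ := p / (p - γ) with hw₁def
  set w₂ : ℝ := -γ / (p - γ) with hw₂def
  have hw₁ : 0 < w₁ := div_pos hp hq
  have hw₂ : 0 < w₂ := div_pos ha hq
  have hw : w₁ + w₂ = 1 := by
    rw [hw₁def, hw₂def, ← add_div]
    field_simp
    ring
  have hB0 : (0:ℝ) < (2:ℝ) ^ γ * ν₀ := by positivity
  set B : ℝ := (2:ℝ) ^ γ * ν₀ with hBdef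
  rcases eq_or_lt_of_le ht with ht0 | ht0
  · -- t = 0
    have h0 : t ^ w₁ = 0 := by rw [← ht0, Real.zero_rpow hw₁.ne']
    have : Real.exp (-(ν₀ * t * (1 + s) ^ γ) - α * s ^ p) ≤ 1 := by
      rw [Real.exp_le_one_iff]
      have h1 : (0:ℝ) < (1 + s) ^ γ := Real.rpow_pos_of_pos (by linarith) γ
      have h2 : (0:ℝ) ≤ α * s ^ p := by positivity
      nlinarith [mul_pos hν h1]
    calc Real.exp (-(ν₀ * t * (1 + s) ^ γ) - α * s ^ p) ≤ 1 := this
      _ = Real.exp (-(c * α ^ w₂ * t ^ w₁)) := by rw [h0, mul_zero, neg_zero, Real.exp_zero]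
      _ ≤ _ := le_add_of_nonneg_left (Real.exp_pos _).le
  rcases le_or_gt s 1 with h1 | h1
  · -- s ≤ 1 : first term dominates
    have hb : (2:ℝ) ^ γ ≤ (1 + s) ^ γ :=
      Real.rpow_le_rpow_of_nonpos (by linarith) (by linarith) hγ0.le
    have h2 : (2:ℝ) ^ γ * ν₀ * t ≤ ν₀ * t * (1 + s) ^ γ + α * s ^ p := by
      have h3 : (0:ℝ) ≤ α * s ^ p := by positivity
      nlinarith [mul_le_mul_of_nonneg_left hb (by positivity : (0:ℝ) ≤ ν₀ * t)]
    calc Real.exp (-(ν₀ * t * (1 + s) ^ γ) - α * s ^ p)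
        ≤ Real.exp (-((2:ℝ) ^ γ * ν₀ * t)) := Real.exp_le_exp.mpr (by linarith)
      _ ≤ _ := le_add_of_nonneg_right (Real.exp_pos _).le
  · -- s > 1 : AM-GM
    have hsp : (0:ℝ) < s := by linarith
    have hb : (2:ℝ) ^ γ * s ^ γ ≤ (1 + s) ^ γ := by
      have := Real.rpow_le_rpow_of_nonpos (by linarith : (0:ℝ) < 1 + s)
        (by linarith : 1 + s ≤ 2 * s) hγ0.le
      rwa [Real.mul_rpow (by norm_num) hs0] at this
    -- AM-GM : m ≤ B*t*s^γ + α*s^p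
    have hX : (0:ℝ) < (B / p) ^ w₁ := by positivity
    have hqsplit : ((p - γ):ℝ) ^ w₁ * (p - γ) ^ w₂ = p - γ := by
      rw [← Real.rpow_add hq, hw, Real.rpow_one]
    have hasplit : ((-γ):ℝ) ^ w₁ = (-γ) * ((-γ) ^ w₂)⁻¹ := by
      rw [← Real.rpow_neg ha.le, show w₁ = 1 + (-w₂) by linarith, Real.rpow_add ha,
        Real.rpow_one]
    have hkey : c * α ^ w₂ = (B / w₁) ^ w₁ * (α / w₂) ^ w₂ := by
      have e1 : ((-γ) * (2:ℝ) ^ γ * ν₀ / p) ^ w₁ = (-γ) ^ w₁ * (B / p) ^ w₁ := by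
        rw [show (-γ) * (2:ℝ) ^ γ * ν₀ / p = (-γ) * (B / p) by rw [hBdef]; ring,
          Real.mul_rpow ha.le (by positivity)]
      have e2 : (B / w₁) ^ w₁ = (p - γ) ^ w₁ * (B / p) ^ w₁ := by
        rw [show B / w₁ = (p - γ) * (B / p) by rw [hw₁def]; field_simp,
          Real.mul_rpow hq.le (by positivity)]
      have e3 : (α / w₂) ^ w₂ = α ^ w₂ * (p - γ) ^ w₂ / (-γ) ^ w₂ := by
        rw [hw₂def, div_div_eq_mul_div, Real.div_rpow (by positivity) ha.le,
          Real.mul_rpow hα.le hq.le]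
      have e4 : ((-γ):ℝ) ^ w₁ = (-γ) / (-γ) ^ w₂ := by
        rw [show w₁ = 1 - w₂ by linarith, Real.rpow_sub ha, Real.rpow_one]
      have hA2 : (0:ℝ) < (-γ) ^ w₂ := Real.rpow_pos_of_pos ha w₂
      rw [hc, e1, e2, e3, e4]
      have h5 : ((-γ):ℝ) ^ w₂ ≠ 0 := hA2.ne'
      have h6 : γ ≠ 0 := hγ0.ne
      field_simp
      linear_combination (-1 : ℝ) * hqsplit
    have key : c * α ^ w₂ * t ^ w₁ ≤ B * t * s ^ γ + α * s ^ p := by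
      have amgm := Real.geom_mean_le_arith_mean2_weighted hw₁.le hw₂.le
        (by positivity : (0:ℝ) ≤ B * t * s ^ γ / w₁)
        (by positivity : (0:ℝ) ≤ α * s ^ p / w₂) hw
      have hsum : w₁ * (B * t * s ^ γ / w₁) + w₂ * (α * s ^ p / w₂)
          = B * t * s ^ γ + α * s ^ p := by field_simp
      rw [hsum] at amgm
      refine le_trans (le_of_eq ?_) amgm
      have r1 : (B * t * s ^ γ / w₁) ^ w₁ = (B / w₁) ^ w₁ * t ^ w₁ * (s ^ γ) ^ w₁ := by
        rw [show B * t * s ^ γ / w₁ = (B / w₁) * t * s ^ γ by ring,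
          Real.mul_rpow (by positivity) (by positivity),
          Real.mul_rpow (by positivity) ht]
      have r2 : (α * s ^ p / w₂) ^ w₂ = (α / w₂) ^ w₂ * (s ^ p) ^ w₂ := by
        rw [show α * s ^ p / w₂ = (α / w₂) * s ^ p by ring,
          Real.mul_rpow (by positivity) (by positivity)]
      have r3 : (s ^ γ) ^ w₁ * (s ^ p) ^ w₂ = 1 := by
        rw [← Real.rpow_mul hs0, ← Real.rpow_mul hs0, ← Real.rpow_add hsp]
        have : γ * w₁ + p * w₂ = 0 := by
          rw [hw₁def, hw₂def]; field_simp; ring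
        rw [this, Real.rpow_zero]
      rw [r1, r2, hkey]
      calc (B / w₁) ^ w₁ * (α / w₂) ^ w₂ * t ^ w₁
          = (B / w₁) ^ w₁ * t ^ w₁ * ((α / w₂) ^ w₂ * ((s ^ γ) ^ w₁ * (s ^ p) ^ w₂)) := by
            rw [r3]; ring
        _ = (B / w₁) ^ w₁ * t ^ w₁ * (s ^ γ) ^ w₁ * ((α / w₂) ^ w₂ * (s ^ p) ^ w₂) := by
            ring
    have h2 : c * α ^ w₂ * t ^ w₁ ≤ ν₀ * t * (1 + s) ^ γ + α * s ^ p := by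
      have h3 : B * t * s ^ γ ≤ ν₀ * t * (1 + s) ^ γ := by
        have := mul_le_mul_of_nonneg_left hb (by positivity : (0:ℝ) ≤ ν₀ * t)
        calc B * t * s ^ γ = ν₀ * t * ((2:ℝ) ^ γ * s ^ γ) := by rw [hBdef]; ring
          _ ≤ ν₀ * t * (1 + s) ^ γ := this
      linarith
    calc Real.exp (-(ν₀ * t * (1 + s) ^ γ) - α * s ^ p)
        ≤ Real.exp (-(c * α ^ w₂ * t ^ w₁)) := Real.exp_le_exp.mpr (by linarith)
      _ ≤ _ := le_add_of_nonneg_left (Real.exp_pos _).le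
end

section
/- Let c₁ > 0 and 0 < ε with εc₁ < 1/16. Then for all ξ, ξ* ∈ ℝ³ with ξ ≠ ξ*, |exp(ε(θ(ξ) − θ(ξ*))) − 1| · exp(−(1/16)(|ξ−ξ*|² + (|ξ|²−|ξ*|²)²/|ξ−ξ*|²)) ≤ ε c₁ · ||ξ|² − |ξ*|²| · exp(−(1/16)·2·||ξ|²−|ξ*|²|) · exp(εc₁||ξ|²−|ξ*|²|), and consequently this quantity tends to 0 uniformly in ξ, ξ* as ε → 0, for any θ satisfying |θ(ξ) − θ(ξ*)| ≤ c₁||ξ|² − |ξ*|²|. -/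
lemma aux_exp_sub_one_abs_le (a : ℝ) : |Real.exp a - 1| ≤ |a| * Real.exp |a| := by
  rcases le_or_gt 0 a with h | h
  · rw [abs_of_nonneg h, abs_of_nonneg (by linarith [Real.one_le_exp h])]
    have h1 := Real.add_one_le_exp (-a)
    have h2 : Real.exp (-a) * Real.exp a = 1 := by
      rw [← Real.exp_add]; simp
    nlinarith [Real.exp_pos a]
  · rw [abs_of_neg h, abs_of_nonpos (by linarith [Real.exp_lt_one_iff.mpr h])]
    nlinarith [Real.add_one_le_exp a, Real.one_le_exp (by linarith : (0:ℝ) ≤ -a)]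

lemma aux_main (c₁ : ℝ) (hc : 0 < c₁) (θ : EuclideanSpace ℝ (Fin 3) → ℝ)
    (hθ : ∀ ξ η : EuclideanSpace ℝ (Fin 3), |θ ξ - θ η| ≤ c₁ * |‖ξ‖ ^ 2 - ‖η‖ ^ 2|)
    (ε : ℝ) (hε : 0 < ε) (ξ η : EuclideanSpace ℝ (Fin 3)) (hne : ξ ≠ η) :
    |Real.exp (ε * (θ ξ - θ η)) - 1| *
          Real.exp (-(1 / 16) * (‖ξ - η‖ ^ 2 + (‖ξ‖ ^ 2 - ‖η‖ ^ 2) ^ 2 / ‖ξ - η‖ ^ 2))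
        ≤ ε * c₁ * |‖ξ‖ ^ 2 - ‖η‖ ^ 2| *
            Real.exp (-(1 / 16) * (2 * |‖ξ‖ ^ 2 - ‖η‖ ^ 2|)) *
            Real.exp (ε * c₁ * |‖ξ‖ ^ 2 - ‖η‖ ^ 2|) := by
  set D := |‖ξ‖ ^ 2 - ‖η‖ ^ 2| with hD
  have hDnn : 0 ≤ D := abs_nonneg _
  have hs : 0 < ‖ξ - η‖ ^ 2 := by
    have h0 : ξ - η ≠ 0 := sub_ne_zero.mpr hne
    exact pow_pos (norm_pos_iff.mpr h0) 2
  set s := ‖ξ - η‖ ^ 2 with hs0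
  have hsq : (‖ξ‖ ^ 2 - ‖η‖ ^ 2) ^ 2 = D ^ 2 := (sq_abs _).symm
  have hAM : 2 * D ≤ s + (‖ξ‖ ^ 2 - ‖η‖ ^ 2) ^ 2 / s := by
    rw [hsq]
    have h1 : 2 * D - s ≤ D ^ 2 / s := by
      rw [le_div_iff₀ hs]; nlinarith [sq_nonneg (s - D)]
    linarith
  have ha : |ε * (θ ξ - θ η)| ≤ ε * c₁ * D := by
    rw [abs_mul, abs_of_pos hε]
    calc ε * |θ ξ - θ η| ≤ ε * (c₁ * D) :=
          mul_le_mul_of_nonneg_left (hθ ξ η) hε.le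
      _ = ε * c₁ * D := by ring
  have h1 : |Real.exp (ε * (θ ξ - θ η)) - 1| ≤ ε * c₁ * D * Real.exp (ε * c₁ * D) := by
    calc |Real.exp (ε * (θ ξ - θ η)) - 1|
        ≤ |ε * (θ ξ - θ η)| * Real.exp |ε * (θ ξ - θ η)| := aux_exp_sub_one_abs_le _
      _ ≤ ε * c₁ * D * Real.exp (ε * c₁ * D) := by
          apply mul_le_mul ha (Real.exp_le_exp.mpr ha) (Real.exp_nonneg _)
          positivity
  have h2 : Real.exp (-(1 / 16) * (s + (‖ξ‖ ^ 2 - ‖η‖ ^ 2) ^ 2 / s))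
      ≤ Real.exp (-(1 / 16) * (2 * D)) := by
    apply Real.exp_le_exp.mpr; nlinarith
  calc |Real.exp (ε * (θ ξ - θ η)) - 1| *
        Real.exp (-(1 / 16) * (s + (‖ξ‖ ^ 2 - ‖η‖ ^ 2) ^ 2 / s))
      ≤ (ε * c₁ * D * Real.exp (ε * c₁ * D)) * Real.exp (-(1 / 16) * (2 * D)) := by
        apply mul_le_mul h1 h2 (Real.exp_nonneg _) (by positivity)
    _ = ε * c₁ * D * Real.exp (-(1 / 16) * (2 * D)) * Real.exp (ε * c₁ * D) := by ring

theorem stmt_15 (c₁ : ℝ) (hc : 0 < c₁) (θ : EuclideanSpace ℝ (Fin 3) → ℝ)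
    (hθ : ∀ ξ η : EuclideanSpace ℝ (Fin 3), |θ ξ - θ η| ≤ c₁ * |‖ξ‖ ^ 2 - ‖η‖ ^ 2|)
    (ε : ℝ) (hε : 0 < ε) (hεc : ε * c₁ < 1 / 16) :
    (∀ ξ η : EuclideanSpace ℝ (Fin 3), ξ ≠ η →
      |Real.exp (ε * (θ ξ - θ η)) - 1| *
          Real.exp (-(1 / 16) * (‖ξ - η‖ ^ 2 + (‖ξ‖ ^ 2 - ‖η‖ ^ 2) ^ 2 / ‖ξ - η‖ ^ 2))
        ≤ ε * c₁ * |‖ξ‖ ^ 2 - ‖η‖ ^ 2| *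
            Real.exp (-(1 / 16) * (2 * |‖ξ‖ ^ 2 - ‖η‖ ^ 2|)) *
            Real.exp (ε * c₁ * |‖ξ‖ ^ 2 - ‖η‖ ^ 2|)) ∧
    ∀ η' : ℝ, 0 < η' → ∃ ε₀ : ℝ, 0 < ε₀ ∧ ∀ ε' : ℝ, 0 < ε' → ε' < ε₀ →
      ∀ ξ η : EuclideanSpace ℝ (Fin 3), ξ ≠ η →
        |Real.exp (ε' * (θ ξ - θ η)) - 1| *
            Real.exp (-(1 / 16) * (‖ξ - η‖ ^ 2 + (‖ξ‖ ^ 2 - ‖η‖ ^ 2) ^ 2 / ‖ξ - η‖ ^ 2))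
          ≤ η' := by
  constructor
  · exact fun ξ η hne => aux_main c₁ hc θ hθ ε hε ξ η hne
  · intro η' hη'
    refine ⟨min (1 / (16 * c₁)) (η' / (16 * c₁)), by positivity, ?_⟩
    intro ε' hε' hlt ξ η hne
    have h1 := aux_main c₁ hc θ hθ ε' hε' ξ η hne
    set D := |‖ξ‖ ^ 2 - ‖η‖ ^ 2| with hD
    have hDnn : 0 ≤ D := abs_nonneg _
    have hεc1 : ε' * c₁ ≤ 1 / 16 := by
      have := lt_of_lt_of_le hlt (min_le_left _ _)
      rw [lt_div_iff₀ (by positivity)] at this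
      linarith
    have hεc2 : 16 * (ε' * c₁) ≤ η' := by
      have := lt_of_lt_of_le hlt (min_le_right _ _)
      rw [lt_div_iff₀ (by positivity)] at this
      linarith
    have h2 : ε' * c₁ * D * Real.exp (-(1 / 16) * (2 * D)) * Real.exp (ε' * c₁ * D)
        ≤ ε' * c₁ * (D * Real.exp (-(D / 16))) := by
      have hexp : Real.exp (-(1 / 16) * (2 * D)) * Real.exp (ε' * c₁ * D)
          ≤ Real.exp (-(D / 16)) := by
        rw [← Real.exp_add]
        apply Real.exp_le_exp.mpr
        nlinarith
      calc ε' * c₁ * D * Real.exp (-(1 / 16) * (2 * D)) * Real.exp (ε' * c₁ * D)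
          = (ε' * c₁ * D) * (Real.exp (-(1 / 16) * (2 * D)) * Real.exp (ε' * c₁ * D)) := by
            ring
        _ ≤ (ε' * c₁ * D) * Real.exp (-(D / 16)) :=
            mul_le_mul_of_nonneg_left hexp (by positivity)
        _ = ε' * c₁ * (D * Real.exp (-(D / 16))) := by ring
    have h3 : D * Real.exp (-(D / 16)) ≤ 16 := by
      have hle : D / 16 ≤ Real.exp (D / 16) := by
        linarith [Real.add_one_le_exp (D / 16)]
      have hmul : Real.exp (-(D / 16)) * Real.exp (D / 16) = 1 := by
        rw [← Real.exp_add]; simp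
      nlinarith [Real.exp_pos (D / 16), Real.exp_pos (-(D / 16))]
    calc |Real.exp (ε' * (θ ξ - θ η)) - 1| *
          Real.exp (-(1 / 16) * (‖ξ - η‖ ^ 2 + (‖ξ‖ ^ 2 - ‖η‖ ^ 2) ^ 2 / ‖ξ - η‖ ^ 2))
        ≤ ε' * c₁ * (D * Real.exp (-(D / 16))) := le_trans h1 h2
      _ ≤ ε' * c₁ * 16 := mul_le_mul_of_nonneg_left h3 (by positivity)
      _ ≤ η' := by linarith
end
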